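/- Let γ ≥ 0, d ≥ 2, and 1 ≤ m ≤ d−1, β > 0. Define r_{γ,d}(β) as the supremum over all cuboids R ⊂ ℝ^d and λ > 0 of Tr(−Δ_R^{β√λ}−λ)₋^γ / (L^{sc}_{γ,d}|R|λ^{γ+d/2}). Then r_{γ,d}(β) ≤ r_{γ,d−m}(β) · r_{γ+(d−m)/2, m}(β). -/

import Mathlib

open Real

/-- The set of eigenvalues of the Robin Laplacian on (0,1) with parameter `b`,
characterized by the transcendental equation; each such eigenvalue is simple. -/
def RobinEV (b : ℝ) : Set ℝ :=
  {μ : ℝ | 0 < μ ∧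
    2 * Real.sqrt μ * Real.cos (Real.sqrt μ)
      + (b - μ / b) * Real.sin (Real.sqrt μ) = 0}

/-- Riesz-mean summand with the paper's convention (counting function for γ = 0). -/
noncomputable def rieszWeight (γ lam μ : ℝ) : ℝ :=
  if μ ≤ lam then (lam - μ) ^ γ else 0

/-- Riesz mean of order γ of the Robin Laplacian with parameter `b` on the
cuboid ∏ᵢ (0, l i) ⊂ ℝ^d: by separation of variables its eigenvalues are the
sums over coordinates of `μᵢ / lᵢ²` with `μᵢ` an eigenvalue of the unit-interval
problem with parameter `b * l i`. -/
noncomputable def cuboidRobinRiesz (γ : ℝ) (d : ℕ) (l : Fin d → ℝ) (b lam : ℝ) : ℝ :=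
  ∑' k : (∀ i : Fin d, {μ : ℝ // μ ∈ RobinEV (b * l i)}),
    rieszWeight γ lam (∑ i, (k i : ℝ) / (l i) ^ 2)

/-- The semiclassical constant L^sc_{γ,d}. -/
noncomputable def Lsc (γ : ℝ) (d : ℕ) : ℝ :=
  Real.Gamma (1 + γ) / ((4 * Real.pi) ^ ((d : ℝ) / 2) * Real.Gamma (1 + γ + (d : ℝ) / 2))

/-- r_{γ,d}(β): the supremum over cuboids R ⊂ ℝ^d and λ > 0 of
Tr(-Δ_R^{β√λ} - λ)₋^γ / (L^sc_{γ,d}|R|λ^{γ+d/2}). -/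
noncomputable def rq (γ : ℝ) (d : ℕ) (β : ℝ) : ℝ :=
  sSup {x : ℝ | ∃ l : Fin d → ℝ, ∃ lam : ℝ, (∀ i, 0 < l i) ∧ 0 < lam ∧
    x = cuboidRobinRiesz γ d l (β * Real.sqrt lam) lam
          / (Lsc γ d * (∏ i, l i) * lam ^ (γ + (d : ℝ) / 2))}

/-!
Separation of variables writes the Riesz mean of a cuboid in `ℝ^(n+m)` as a sum, over the
eigenvalues `B` of its last `m` edges, of Riesz means of the first `n` edges at level `λ - B`.
The Robin parameter `β √λ` exceeds `β √(λ - B)` and Riesz means decrease in the parameter, so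
each inner term is at most `r_{γ,n}(β) L_{γ,n} |R₁| (λ - B)₊^(γ + n/2)`. Summed over `B` this is
a Riesz mean of order `γ + n/2` of the `m`-dimensional cuboid, at most
`r_{γ+n/2,m}(β) L_{γ+n/2,m} |R₂| λ^(γ + n/2 + m/2)`, and the constants multiply to `L_{γ,n+m}`.

On the unit interval, `√μ` is a zero of `robinChar c`, which on each window `(kπ, (k+1)π)` is
`2 t sin t` times the strictly decreasing `robinCot c`. Hence each window holds at most one
eigenvalue, and it moves left as `c` decreases. Together with `μ ≥ min c 1` this gives the
Weyl-type bound that makes the suprema `r` finite.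
-/

open Set

noncomputable def robinChar (c t : ℝ) : ℝ := 2 * t * cos t + (c - t ^ 2 / c) * sin t

noncomputable def robinCot (c t : ℝ) : ℝ := cos t / sin t - (t / (2 * c) - c / (2 * t))

def piWindow (k : ℕ) : Set ℝ := Ioo (k * π) ((k + 1) * π)

section RobinChar

variable {c t : ℝ} {k : ℕ}

lemma continuous_robinChar (c : ℝ) : Continuous (robinChar c) := by
  unfold robinChar; fun_prop

lemma sin_ne_zero_of_robinChar_eq_zero (ht : 0 < t) (h : robinChar c t = 0) : sin t ≠ 0 := by
  intro hs
  have hcos : cos t ≠ 0 := by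
    intro hc; simpa [hs, hc] using sin_sq_add_cos_sq t
  simp [robinChar, hs, ht.ne', hcos] at h

lemma robinChar_eq_mul_robinCot (hc : c ≠ 0) (ht : t ≠ 0) (hs : sin t ≠ 0) :
    robinChar c t = 2 * t * sin t * robinCot c t := by
  unfold robinChar robinCot; field_simp; ring

lemma robinCot_eq_zero (hc : c ≠ 0) (ht : 0 < t) (h : robinChar c t = 0) : robinCot c t = 0 := by
  have hs := sin_ne_zero_of_robinChar_eq_zero ht h
  rw [robinChar_eq_mul_robinCot hc ht.ne' hs] at h
  simpa [ht.ne', hs] using h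

lemma robinCot_le_robinCot {c₁ c₂ : ℝ} (hc₁ : 0 < c₁) (hc : c₁ ≤ c₂) (ht : 0 < t) :
    robinCot c₁ t ≤ robinCot c₂ t := by
  have h₁ : t / (2 * c₂) ≤ t / (2 * c₁) := by gcongr
  have h₂ : c₁ / (2 * t) ≤ c₂ / (2 * t) := by gcongr
  simp only [robinCot]; linarith

lemma pos_of_mem_piWindow (h : t ∈ piWindow k) : 0 < t :=
  lt_of_le_of_lt (by positivity) h.1

lemma floor_div_pi_eq_of_mem_piWindow (h : t ∈ piWindow k) : ⌊t / π⌋₊ = k := by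
  rw [Nat.floor_eq_iff (div_nonneg (pos_of_mem_piWindow h).le pi_pos.le),
    le_div_iff₀ pi_pos, div_lt_iff₀ pi_pos]
  exact ⟨h.1.le, h.2⟩

lemma mem_piWindow_floor (ht : 0 < t) (hs : sin t ≠ 0) : t ∈ piWindow ⌊t / π⌋₊ := by
  have h₀ : 0 ≤ t / π := div_nonneg ht.le pi_pos.le
  refine ⟨?_, (div_lt_iff₀ pi_pos).1 (Nat.lt_floor_add_one _)⟩
  refine lt_of_le_of_ne ((le_div_iff₀ pi_pos).1 (Nat.floor_le h₀)) fun h => hs ?_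
  rw [← h, sin_nat_mul_pi]

lemma neg_one_pow_mul_sin_pos (h : t ∈ piWindow k) : 0 < (-1) ^ k * sin t := by
  have hsub : 0 < sin (t - k * π) := sin_pos_of_pos_of_lt_pi (by linarith [h.1]) (by linarith [h.2])
  rwa [sin_sub_nat_mul_pi] at hsub

lemma cos_div_sin_strictAntiOn (k : ℕ) : StrictAntiOn (fun t => cos t / sin t) (piWindow k) := by
  intro s hs t ht hst
  have hsin : 0 < sin s * sin t := by
    have := mul_pos (neg_one_pow_mul_sin_pos hs) (neg_one_pow_mul_sin_pos ht)
    rwa [mul_mul_mul_comm, ← mul_pow, neg_one_mul, neg_neg, one_pow, one_mul] at this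
  have hts : 0 < sin (t - s) := sin_pos_of_pos_of_lt_pi (by linarith) (by linarith [hs.1, ht.2])
  have hs0 : sin s ≠ 0 := fun h => by simp [h] at hsin
  have ht0 : sin t ≠ 0 := fun h => by simp [h] at hsin
  rw [← sub_pos]
  have : cos s / sin s - cos t / sin t = sin (t - s) / (sin s * sin t) := by
    rw [sin_sub]; field_simp
  simp only [this]
  positivity

lemma robinCot_strictAntiOn (hc : 0 < c) (k : ℕ) : StrictAntiOn (robinCot c) (piWindow k) := by
  intro s hs t ht hst
  have hs₀ := pos_of_mem_piWindow hs
  have h₁ : cos t / sin t < cos s / sin s := cos_div_sin_strictAntiOn k hs ht hst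
  have h₂ : s / (2 * c) < t / (2 * c) := by gcongr
  have h₃ : c / (2 * t) < c / (2 * s) := by gcongr
  simp only [robinCot]; linarith

lemma eq_of_robinChar_eq_zero {s : ℝ} (hc : 0 < c) (hs : s ∈ piWindow k) (ht : t ∈ piWindow k)
    (hs₀ : robinChar c s = 0) (ht₀ : robinChar c t = 0) : s = t :=
  (robinCot_strictAntiOn hc k).injOn hs ht <| by
    rw [robinCot_eq_zero hc.ne' (pos_of_mem_piWindow hs) hs₀,
      robinCot_eq_zero hc.ne' (pos_of_mem_piWindow ht) ht₀]

lemma exists_neg_one_pow_mul_robinChar_pos (hc : 0 < c) (ht : t ∈ piWindow k) :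
    ∃ a ∈ Ico (k * π) t, 0 < (-1) ^ k * robinChar c a := by
  rcases Nat.eq_zero_or_pos k with rfl | hk
  · -- both terms of `robinChar c a` are positive once `a ≤ c` and `a < π / 2`
    have ht' : t < π := by simpa using ht.2
    have ht₀ := pos_of_mem_piWindow ht
    obtain ⟨a, ha₀, hat, hac⟩ : ∃ a, 0 < a ∧ 2 * a ≤ t ∧ a ≤ c :=
      ⟨min t c / 2, by positivity, by linarith [min_le_left t c], by linarith [min_le_right t c]⟩
    have hcos : 0 < cos a := cos_pos_of_mem_Ioo ⟨by linarith, by linarith⟩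
    have hsin : 0 < sin a := sin_pos_of_pos_of_lt_pi ha₀ (by linarith)
    have hca : 0 ≤ c - a ^ 2 / c := by
      rw [sub_nonneg, div_le_iff₀ hc]; nlinarith
    refine ⟨a, ⟨by simp [ha₀.le], by linarith⟩, ?_⟩
    simp only [pow_zero, one_mul, robinChar]
    nlinarith [mul_pos ha₀ hcos, mul_nonneg hca hsin.le]
  · refine ⟨k * π, ⟨le_rfl, ht.1⟩, ?_⟩
    have hkπ : 0 < (k : ℝ) * π := by positivity
    simp only [robinChar, sin_nat_mul_pi, cos_nat_mul_pi, mul_zero, add_zero]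
    have : ((-1 : ℝ) ^ k) ^ 2 = 1 := by rw [← pow_mul, mul_comm, pow_mul]; norm_num
    nlinarith

lemma exists_robinChar_eq_zero_le {c₁ c₂ : ℝ} (hc₁ : 0 < c₁) (hc : c₁ ≤ c₂)
    (ht : t ∈ piWindow k) (h₀ : robinChar c₂ t = 0) :
    ∃ s ∈ piWindow k, s ≤ t ∧ robinChar c₁ s = 0 := by
  have ht₀ := pos_of_mem_piWindow ht
  have hs := sin_ne_zero_of_robinChar_eq_zero ht₀ h₀
  obtain ⟨a, ha, hga⟩ := exists_neg_one_pow_mul_robinChar_pos hc₁ ht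
  have hgt : (-1) ^ k * robinChar c₁ t ≤ 0 := by
    have hcot : robinCot c₁ t ≤ 0 :=
      (robinCot_le_robinCot hc₁ hc ht₀).trans (robinCot_eq_zero (hc₁.trans_le hc).ne' ht₀ h₀).le
    rw [robinChar_eq_mul_robinCot hc₁.ne' ht₀.ne' hs]
    have := neg_one_pow_mul_sin_pos ht
    have : (-1) ^ k * (2 * t * sin t * robinCot c₁ t)
        = (2 * t) * ((-1) ^ k * sin t) * robinCot c₁ t := by ring
    rw [this]
    exact mul_nonpos_of_nonneg_of_nonpos (by positivity) hcot
  obtain ⟨s, hs, hgs⟩ := intermediate_value_Icc' ha.2.le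
    ((continuous_const.mul (continuous_robinChar c₁)).continuousOn) ⟨hgt, hga.le⟩
  have has : a ≠ s := by rintro rfl; exact hga.ne' hgs
  refine ⟨s, ⟨ha.1.trans_lt (lt_of_le_of_ne hs.1 has), hs.2.trans_lt ht.2⟩, hs.2, ?_⟩
  simpa using hgs

lemma min_le_sq_of_robinChar_eq_zero (hc : 0 < c) (ht : 0 < t) (h : robinChar c t = 0) :
    min c 1 ≤ t ^ 2 := by
  rcases le_or_gt 1 t with h1 | h1
  · exact (min_le_right _ _).trans (by nlinarith)
  have hsin : 0 < sin t := sin_pos_of_pos_of_lt_pi ht (by linarith [pi_gt_three])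
  have hsin_le : sin t ≤ t := sin_le ht.le
  have hcos : 1 / 2 ≤ cos t := by nlinarith [one_sub_sq_div_two_le_cos (x := t)]
  have hroot : 2 * c * t * cos t = (t ^ 2 - c ^ 2) * sin t := by
    unfold robinChar at h; field_simp at h; linarith
  -- `2 c t cos t = (t ^ 2 - c ^ 2) sin t ≤ t ^ 3` and `cos t ≥ 1 / 2`
  have : c * t ≤ t ^ 3 := by nlinarith [mul_pos hc ht, sq_nonneg c]
  exact (min_le_left _ _).trans (by nlinarith)

end RobinChar

section RobinEV

variable {c μ : ℝ}

lemma mem_RobinEV_iff : μ ∈ RobinEV c ↔ 0 < μ ∧ robinChar c (√μ) = 0 := by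
  simp only [RobinEV, robinChar, mem_ofPred_eq]
  refine and_congr_right fun hμ => ?_
  rw [sq_sqrt hμ.le]

lemma robinChar_sqrt_eq_zero (h : μ ∈ RobinEV c) : robinChar c (√μ) = 0 :=
  (mem_RobinEV_iff.1 h).2

lemma sqrt_mem_piWindow (h : μ ∈ RobinEV c) : √μ ∈ piWindow ⌊√μ / π⌋₊ :=
  have h₀ : 0 < √μ := sqrt_pos.2 h.1
  mem_piWindow_floor h₀ (sin_ne_zero_of_robinChar_eq_zero h₀ (robinChar_sqrt_eq_zero h))

lemma min_le_of_mem_RobinEV (hc : 0 < c) (h : μ ∈ RobinEV c) : min c 1 ≤ μ := by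
  simpa [sq_sqrt h.1.le] using
    min_le_sq_of_robinChar_eq_zero hc (sqrt_pos.2 h.1) (robinChar_sqrt_eq_zero h)

lemma injective_floor_sqrt_div_pi (hc : 0 < c) :
    Function.Injective fun μ : {μ // μ ∈ RobinEV c} => ⌊√(μ : ℝ) / π⌋₊ := by
  rintro ⟨μ, hμ⟩ ⟨ν, hν⟩ (h : ⌊√μ / π⌋₊ = ⌊√ν / π⌋₊)
  have hμw := sqrt_mem_piWindow hμ
  rw [h] at hμw
  have := eq_of_robinChar_eq_zero hc hμw (sqrt_mem_piWindow hν)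
    (robinChar_sqrt_eq_zero hμ) (robinChar_sqrt_eq_zero hν)
  exact Subtype.ext ((sqrt_inj hμ.1.le hν.1.le).1 this)

lemma mapsTo_floor_sqrt_div_pi (Λ : ℝ) :
    MapsTo (fun μ : {μ // μ ∈ RobinEV c} => ⌊√(μ : ℝ) / π⌋₊)
      {μ | (μ : ℝ) ≤ Λ} (Iic ⌊√Λ / π⌋₊) := fun _ hμ =>
  Nat.floor_le_floor (div_le_div_of_nonneg_right (sqrt_le_sqrt hμ) pi_pos.le)

lemma finite_setOf_robinEV_le (hc : 0 < c) (Λ : ℝ) :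
    {μ : {μ // μ ∈ RobinEV c} | (μ : ℝ) ≤ Λ}.Finite :=
  (finite_Iic _).of_injOn (mapsTo_floor_sqrt_div_pi Λ) (injective_floor_sqrt_div_pi hc).injOn

lemma ncard_setOf_robinEV_le (hc : 0 < c) (Λ : ℝ) :
    ({μ : {μ // μ ∈ RobinEV c} | (μ : ℝ) ≤ Λ}.ncard : ℝ) ≤ √Λ / π + 1 := by
  have := ncard_le_ncard_of_injOn _ (mapsTo_floor_sqrt_div_pi Λ)
    (injective_floor_sqrt_div_pi hc).injOn
  rw [Set.ncard_Iic_nat] at this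
  calc (_ : ℝ) ≤ (⌊√Λ / π⌋₊ + 1 : ℕ) := by exact_mod_cast this
    _ ≤ √Λ / π + 1 := by push_cast; gcongr; exact Nat.floor_le (by positivity)

/-- As soon as one eigenvalue lies below `u ^ 2`, the bound `min (β u) 1 ≤ μ` forces
`min β 1 ≤ u`, which turns the count `u / π + 1` into `O(u)`. -/
lemma ncard_setOf_robinEV_le_sq {β u : ℝ} (hβ : 0 < β) (hu : 0 < u) :
    ({μ : {μ // μ ∈ RobinEV (β * u)} | (μ : ℝ) ≤ u ^ 2}.ncard : ℝ)
      ≤ (1 / π + 1 / min β 1) * u := by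
  rcases eq_empty_or_nonempty {μ : {μ // μ ∈ RobinEV (β * u)} | (μ : ℝ) ≤ u ^ 2} with h | ⟨μ, hμ⟩
  · rw [h, ncard_empty, Nat.cast_zero]; positivity
  have hmin : min (β * u) 1 ≤ u ^ 2 := (min_le_of_mem_RobinEV (by positivity) μ.2).trans hμ
  have hu₀ : min β 1 ≤ u := by
    rcases le_total (β * u) 1 with h | h
    · rw [min_eq_left h] at hmin
      exact (min_le_left _ _).trans (by nlinarith)
    · rw [min_eq_right h] at hmin
      exact (min_le_right _ _).trans (by nlinarith)
  have hone : 1 ≤ u / min β 1 := (one_le_div (by positivity)).2 hu₀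
  calc (_ : ℝ) ≤ √(u ^ 2) / π + 1 := ncard_setOf_robinEV_le (by positivity) _
    _ ≤ u / π + u / min β 1 := by rw [sqrt_sq hu.le]; linarith
    _ = (1 / π + 1 / min β 1) * u := by ring

lemma exists_mem_RobinEV_le {c₁ c₂ : ℝ} (hc₁ : 0 < c₁) (hc : c₁ ≤ c₂) (h : μ ∈ RobinEV c₂) :
    ∃ ν ∈ RobinEV c₁, ν ≤ μ ∧ ⌊√ν / π⌋₊ = ⌊√μ / π⌋₊ := by
  obtain ⟨s, hs, hsμ, hs₀⟩ :=
    exists_robinChar_eq_zero_le hc₁ hc (sqrt_mem_piWindow h) (robinChar_sqrt_eq_zero h)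
  have hs₀' : 0 < s := pos_of_mem_piWindow hs
  refine ⟨s ^ 2, mem_RobinEV_iff.2 ⟨by positivity, by rwa [sqrt_sq hs₀'.le]⟩, ?_, ?_⟩
  · calc s ^ 2 ≤ √μ ^ 2 := by gcongr
      _ = μ := sq_sqrt h.1.le
  · rw [sqrt_sq hs₀'.le, floor_div_pi_eq_of_mem_piWindow hs]

end RobinEV

section RieszWeight

variable {γ lam μ : ℝ}

lemma rieszWeight_of_le (h : μ ≤ lam) : rieszWeight γ lam μ = (lam - μ) ^ γ := if_pos h

lemma rieszWeight_of_lt (h : lam < μ) : rieszWeight γ lam μ = 0 := if_neg h.not_ge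

lemma rieszWeight_nonneg (γ lam μ : ℝ) : 0 ≤ rieszWeight γ lam μ := by
  unfold rieszWeight
  split_ifs with h
  · exact rpow_nonneg (sub_nonneg.2 h) γ
  · exact le_rfl

lemma rieszWeight_le_rpow (hγ : 0 ≤ γ) (hlam : 0 ≤ lam) (hμ : 0 ≤ μ) :
    rieszWeight γ lam μ ≤ lam ^ γ := by
  unfold rieszWeight
  split_ifs with h
  · exact rpow_le_rpow (sub_nonneg.2 h) (by linarith) hγ
  · exact rpow_nonneg hlam γ

lemma rieszWeight_antitone (hγ : 0 ≤ γ) (lam : ℝ) : Antitone (rieszWeight γ lam) := by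
  intro μ ν hμν
  rcases le_or_gt ν lam with h | h
  · rw [rieszWeight_of_le h, rieszWeight_of_le (hμν.trans h)]
    exact rpow_le_rpow (sub_nonneg.2 h) (by linarith) hγ
  · rw [rieszWeight_of_lt h]
    exact rieszWeight_nonneg γ lam μ

lemma rieszWeight_add (γ lam μ ν : ℝ) : rieszWeight γ lam (μ + ν) = rieszWeight γ (lam - ν) μ := by
  simp only [rieszWeight, le_sub_iff_add_le, sub_sub, add_comm ν μ]

end RieszWeight

abbrev RobinIndex (d : ℕ) (l : Fin d → ℝ) (b : ℝ) : Type :=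
  ∀ i, {μ : ℝ // μ ∈ RobinEV (b * l i)}

noncomputable def cuboidEigenvalue {d : ℕ} {l : Fin d → ℝ} {b : ℝ} (k : RobinIndex d l b) : ℝ :=
  ∑ i, (k i : ℝ) / l i ^ 2

section Cuboid

variable {γ : ℝ} {d : ℕ} {l : Fin d → ℝ} {b lam : ℝ}

lemma cuboidRobinRiesz_eq_tsum (γ : ℝ) (d : ℕ) (l : Fin d → ℝ) (b lam : ℝ) :
    cuboidRobinRiesz γ d l b lam
      = ∑' k : RobinIndex d l b, rieszWeight γ lam (cuboidEigenvalue k) := rfl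

lemma cuboidEigenvalue_nonneg (k : RobinIndex d l b) : 0 ≤ cuboidEigenvalue k :=
  Finset.sum_nonneg fun i _ => div_nonneg (k i).2.1.le (sq_nonneg _)

lemma cuboidEigenvalue_pos (hd : 0 < d) (hl : ∀ i, l i ≠ 0) (k : RobinIndex d l b) :
    0 < cuboidEigenvalue k :=
  Finset.sum_pos (fun i _ => div_pos (k i).2.1 (pow_two_pos_of_ne_zero (hl i)))
    ⟨⟨0, hd⟩, Finset.mem_univ _⟩

lemma le_of_cuboidEigenvalue_le (hl : ∀ i, l i ≠ 0) {k : RobinIndex d l b}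
    (h : cuboidEigenvalue k ≤ lam) (i : Fin d) : (k i : ℝ) ≤ lam * l i ^ 2 := by
  have hi : (k i : ℝ) / l i ^ 2 ≤ lam :=
    (Finset.single_le_sum (fun j _ => div_nonneg (k j).2.1.le (sq_nonneg (l j)))
      (Finset.mem_univ i)).trans h
  rwa [div_le_iff₀ (pow_two_pos_of_ne_zero (hl i))] at hi

lemma rieszWeight_cuboidEigenvalue_eq_zero (hb : 0 < b) (hl : ∀ i, 0 < l i)
    {k : RobinIndex d l b} (hk : k ∉ Fintype.piFinset fun i =>
      (finite_setOf_robinEV_le (mul_pos hb (hl i)) (lam * l i ^ 2)).toFinset) :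
    rieszWeight γ lam (cuboidEigenvalue k) = 0 := by
  refine rieszWeight_of_lt (not_le.1 fun h => hk ?_)
  simpa using le_of_cuboidEigenvalue_le (fun i => (hl i).ne') h

lemma summable_rieszWeight_cuboidEigenvalue (hb : 0 < b) (hl : ∀ i, 0 < l i) :
    Summable fun k : RobinIndex d l b => rieszWeight γ lam (cuboidEigenvalue k) :=
  summable_of_ne_finset_zero fun _ => rieszWeight_cuboidEigenvalue_eq_zero hb hl

lemma cuboidRobinRiesz_nonneg (γ : ℝ) (d : ℕ) (l : Fin d → ℝ) (b lam : ℝ) :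
    0 ≤ cuboidRobinRiesz γ d l b lam :=
  tsum_nonneg fun _ => rieszWeight_nonneg _ _ _

lemma cuboidRobinRiesz_eq_zero (hd : 0 < d) (hl : ∀ i, l i ≠ 0) (hlam : lam ≤ 0) :
    cuboidRobinRiesz γ d l b lam = 0 := by
  rw [cuboidRobinRiesz_eq_tsum]
  convert tsum_zero with k
  exact rieszWeight_of_lt (hlam.trans_lt (cuboidEigenvalue_pos hd hl k))

lemma cuboidRobinRiesz_le_prod_ncard (hγ : 0 ≤ γ) (hb : 0 < b) (hl : ∀ i, 0 < l i)
    (hlam : 0 ≤ lam) :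
    cuboidRobinRiesz γ d l b lam
      ≤ (∏ i, ({μ : {μ // μ ∈ RobinEV (b * l i)} | (μ : ℝ) ≤ lam * l i ^ 2}.ncard : ℝ))
        * lam ^ γ := by
  rw [cuboidRobinRiesz_eq_tsum, tsum_eq_sum fun _ => rieszWeight_cuboidEigenvalue_eq_zero hb hl]
  refine (Finset.sum_le_card_nsmul _ _ _ fun k _ =>
    rieszWeight_le_rpow hγ hlam (cuboidEigenvalue_nonneg k)).trans_eq ?_
  rw [nsmul_eq_mul, Fintype.card_piFinset]
  push_cast
  simp only [ncard_eq_toFinset_card _ (finite_setOf_robinEV_le (mul_pos hb (hl _)) _)]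

lemma cuboidRobinRiesz_le_weyl (hγ : 0 ≤ γ) {β : ℝ} (hβ : 0 < β) (hl : ∀ i, 0 < l i)
    (hlam : 0 < lam) :
    cuboidRobinRiesz γ d l (β * √lam) lam
      ≤ (1 / π + 1 / min β 1) ^ d * (∏ i, l i) * lam ^ (γ + d / 2) := by
  have hcount : ∀ i, ({μ : {μ // μ ∈ RobinEV (β * √lam * l i)} | (μ : ℝ) ≤ lam * l i ^ 2}.ncard : ℝ)
      ≤ (1 / π + 1 / min β 1) * (l i * √lam) := by
    intro i
    have hu : lam * l i ^ 2 = (l i * √lam) ^ 2 := by rw [mul_pow, sq_sqrt hlam.le, mul_comm]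
    rw [mul_assoc, mul_comm (√lam), hu]
    exact ncard_setOf_robinEV_le_sq hβ (mul_pos (hl i) (sqrt_pos.2 hlam))
  calc cuboidRobinRiesz γ d l (β * √lam) lam
      ≤ (∏ i, ((1 / π + 1 / min β 1) * (l i * √lam))) * lam ^ γ := by
        refine (cuboidRobinRiesz_le_prod_ncard hγ (by positivity) hl hlam.le).trans ?_
        gcongr with i
        exact hcount i
    _ = (1 / π + 1 / min β 1) ^ d * (∏ i, l i) * lam ^ (γ + d / 2) := by
        rw [rpow_add hlam, rpow_div_two_eq_sqrt _ hlam.le, rpow_natCast,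
          Finset.prod_mul_distrib, Finset.prod_mul_distrib]
        simp only [Finset.prod_const, Finset.card_univ, Fintype.card_fin]
        ring

lemma cuboidRobinRiesz_antitoneOn (hγ : 0 ≤ γ) (hl : ∀ i, 0 < l i) :
    AntitoneOn (fun b => cuboidRobinRiesz γ d l b lam) (Ioi 0) := by
  intro b₁ hb₁ b₂ hb₂ hb
  have hcmp : ∀ i (μ : {μ // μ ∈ RobinEV (b₂ * l i)}), ∃ ν : {μ // μ ∈ RobinEV (b₁ * l i)},
      (ν : ℝ) ≤ μ ∧ ⌊√(ν : ℝ) / π⌋₊ = ⌊√(μ : ℝ) / π⌋₊ := fun i μ => by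
    obtain ⟨ν, hν, hle, hfl⟩ := exists_mem_RobinEV_le (mul_pos hb₁ (hl i))
      (mul_le_mul_of_nonneg_right hb (hl i).le) μ.2
    exact ⟨⟨ν, hν⟩, hle, hfl⟩
  choose φ hφ_le hφ_floor using hcmp
  have hinj : Function.Injective fun (k : RobinIndex d l b₂) i => φ i (k i) := by
    intro k k' h
    funext i
    refine injective_floor_sqrt_div_pi (mul_pos (mem_Ioi.1 hb₂) (hl i)) ?_
    simp only [← hφ_floor, congrFun h i]
  refine Summable.tsum_le_tsum_of_inj _ hinj (fun _ _ => rieszWeight_nonneg _ _ _)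
    (fun k => rieszWeight_antitone hγ lam ?_)
    (summable_rieszWeight_cuboidEigenvalue hb₂ hl) (summable_rieszWeight_cuboidEigenvalue hb₁ hl)
  exact Finset.sum_le_sum fun i _ => by gcongr; exact hφ_le i (k i)

end Cuboid

section Semiclassical

variable {γ : ℝ}

lemma Lsc_pos (hγ : -1 < γ) (d : ℕ) : 0 < Lsc γ d := by
  have h₁ : 0 < Gamma (1 + γ) := Gamma_pos_of_pos (by linarith)
  have h₂ : 0 < Gamma (1 + γ + d / 2) :=
    Gamma_pos_of_pos (by linarith [show (0 : ℝ) ≤ d / 2 by positivity])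
  unfold Lsc
  positivity

lemma Lsc_mul_Lsc (hγ : -1 < γ) (n m : ℕ) : Lsc γ n * Lsc (γ + n / 2) m = Lsc γ (n + m) := by
  have hΓ : Gamma (1 + γ + n / 2) ≠ 0 :=
    (Gamma_pos_of_pos (by linarith [show (0 : ℝ) ≤ n / 2 by positivity])).ne'
  have hpow : (4 * π) ^ (((n + m : ℕ) : ℝ) / 2)
      = (4 * π) ^ ((n : ℝ) / 2) * (4 * π) ^ ((m : ℝ) / 2) := by
    rw [← rpow_add (by positivity)]; push_cast; ring_nf
  have hexp : 1 + γ + ((n + m : ℕ) : ℝ) / 2 = 1 + (γ + n / 2) + m / 2 := by push_cast; ring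
  simp only [Lsc, hpow, hexp, ← add_assoc]
  generalize Gamma (1 + γ + n / 2) = G at hΓ ⊢
  field_simp

variable {d : ℕ} {l : Fin d → ℝ} {lam : ℝ}

lemma Lsc_mul_prod_mul_rpow_pos (hγ : -1 < γ) (hl : ∀ i, 0 < l i) (hlam : 0 < lam) :
    0 < Lsc γ d * (∏ i, l i) * lam ^ (γ + d / 2) :=
  mul_pos (mul_pos (Lsc_pos hγ d) (Finset.prod_pos fun i _ => hl i)) (rpow_pos_of_pos hlam _)

lemma rq_nonneg (hγ : -1 < γ) (d : ℕ) (β : ℝ) : 0 ≤ rq γ d β :=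
  Real.sSup_nonneg fun _ ⟨_, _, hl, hlam, hx⟩ => hx ▸
    div_nonneg (cuboidRobinRiesz_nonneg _ _ _ _ _) (Lsc_mul_prod_mul_rpow_pos hγ hl hlam).le

lemma cuboidRobinRiesz_le_rq (hγ : 0 ≤ γ) {β : ℝ} (hβ : 0 < β) (hl : ∀ i, 0 < l i)
    (hlam : 0 < lam) :
    cuboidRobinRiesz γ d l (β * √lam) lam
      ≤ rq γ d β * (Lsc γ d * (∏ i, l i) * lam ^ (γ + d / 2)) := by
  have hγ' : -1 < γ := by linarith
  rw [← div_le_iff₀ (Lsc_mul_prod_mul_rpow_pos hγ' hl hlam)]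
  refine le_csSup ⟨(1 / π + 1 / min β 1) ^ d / Lsc γ d, ?_⟩ ⟨l, lam, hl, hlam, rfl⟩
  rintro _ ⟨l, lam, hl, hlam, rfl⟩
  rw [div_le_div_iff₀ (Lsc_mul_prod_mul_rpow_pos hγ' hl hlam) (Lsc_pos hγ' d)]
  calc _ ≤ (1 / π + 1 / min β 1) ^ d * (∏ i, l i) * lam ^ (γ + d / 2) * Lsc γ d := by
        gcongr
        · exact (Lsc_pos hγ' d).le
        · exact cuboidRobinRiesz_le_weyl hγ hβ hl hlam
    _ = _ := by ring

lemma rq_le (hγ : -1 < γ) {β C : ℝ} (hC : 0 ≤ C) (h : ∀ (l : Fin d → ℝ) (lam : ℝ),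
      (∀ i, 0 < l i) → 0 < lam → cuboidRobinRiesz γ d l (β * √lam) lam
        ≤ C * (Lsc γ d * (∏ i, l i) * lam ^ (γ + d / 2))) :
    rq γ d β ≤ C := by
  refine Real.sSup_le ?_ hC
  rintro _ ⟨l, lam, hl, hlam, rfl⟩
  rw [div_le_iff₀ (Lsc_mul_prod_mul_rpow_pos hγ hl hlam)]
  exact h l lam hl hlam

end Semiclassical

section Splitting

variable {γ b lam : ℝ} {n m : ℕ}

def RobinIndex.appendEquiv (l : Fin (n + m) → ℝ) (b : ℝ) :
    RobinIndex n (fun i => l (Fin.castAdd m i)) b × RobinIndex m (fun j => l (Fin.natAdd n j)) b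
      ≃ RobinIndex (n + m) l b where
  toFun k := Fin.addCases (motive := fun i => {μ // μ ∈ RobinEV (b * l i)}) k.1 k.2
  invFun k := (fun i => k (Fin.castAdd m i), fun j => k (Fin.natAdd n j))
  left_inv k := by simp
  right_inv k := by
    funext i
    refine Fin.addCases (fun i => ?_) (fun j => ?_) i <;> simp

lemma cuboidEigenvalue_appendEquiv {l : Fin (n + m) → ℝ} (k) :
    cuboidEigenvalue (RobinIndex.appendEquiv l b k)
      = cuboidEigenvalue k.1 + cuboidEigenvalue k.2 := by
  simp [cuboidEigenvalue, Fin.sum_univ_add, RobinIndex.appendEquiv]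

lemma cuboidRobinRiesz_add (hb : 0 < b) {l : Fin (n + m) → ℝ} (hl : ∀ i, 0 < l i) :
    cuboidRobinRiesz γ (n + m) l b lam
      = ∑' k : RobinIndex m (fun j => l (Fin.natAdd n j)) b,
          cuboidRobinRiesz γ n (fun i => l (Fin.castAdd m i)) b (lam - cuboidEigenvalue k) := by
  let e := (Equiv.prodComm _ _).trans (RobinIndex.appendEquiv l b)
  have hs : Summable fun p => rieszWeight γ lam (cuboidEigenvalue (e p)) :=
    e.summable_iff.2 (summable_rieszWeight_cuboidEigenvalue hb hl)
  rw [cuboidRobinRiesz_eq_tsum, ← e.tsum_eq, hs.tsum_prod' fun k => hs.prod_factor k]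
  refine tsum_congr fun k₂ => tsum_congr fun k₁ => ?_
  show rieszWeight γ lam (cuboidEigenvalue (RobinIndex.appendEquiv l b (k₁, k₂)))
    = rieszWeight γ (lam - cuboidEigenvalue k₂) (cuboidEigenvalue k₁)
  rw [cuboidEigenvalue_appendEquiv, rieszWeight_add]

end Splitting

section Submultiplicativity

variable {γ β lam : ℝ} {n m : ℕ}

lemma cuboidRobinRiesz_sub_le (hγ : 0 ≤ γ) (hβ : 0 < β) (hn : 0 < n) {l : Fin n → ℝ}
    (hl : ∀ i, 0 < l i) (hlam : 0 < lam) {B : ℝ} (hB : 0 ≤ B) :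
    cuboidRobinRiesz γ n l (β * √lam) (lam - B)
      ≤ rq γ n β * (Lsc γ n * (∏ i, l i) * rieszWeight (γ + n / 2) lam B) := by
  rcases lt_or_ge B lam with hBlam | hBlam
  · have hlamB : 0 < lam - B := sub_pos.2 hBlam
    calc _ ≤ cuboidRobinRiesz γ n l (β * √(lam - B)) (lam - B) :=
          cuboidRobinRiesz_antitoneOn hγ hl (by positivity : 0 < β * √(lam - B))
            (by positivity : 0 < β * √lam) (by gcongr; linarith)
      _ ≤ _ := cuboidRobinRiesz_le_rq hγ hβ hl hlamB
      _ = _ := by rw [rieszWeight_of_le hBlam.le]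
  · rw [cuboidRobinRiesz_eq_zero hn (fun i => (hl i).ne') (by linarith)]
    exact mul_nonneg (rq_nonneg (by linarith) n β) (mul_nonneg
      (mul_nonneg (Lsc_pos (by linarith) n).le (Finset.prod_nonneg fun i _ => (hl i).le))
      (rieszWeight_nonneg _ _ _))

lemma cuboidRobinRiesz_le_rq_mul_rq (hγ : 0 ≤ γ) (hβ : 0 < β) (hn : 0 < n)
    {l : Fin (n + m) → ℝ} (hl : ∀ i, 0 < l i) (hlam : 0 < lam) :
    cuboidRobinRiesz γ (n + m) l (β * √lam) lam
      ≤ rq γ n β * rq (γ + n / 2) m β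
        * (Lsc γ (n + m) * (∏ i, l i) * lam ^ (γ + ((n + m : ℕ) : ℝ) / 2)) := by
  set l₁ : Fin n → ℝ := fun i => l (Fin.castAdd m i)
  set l₂ : Fin m → ℝ := fun j => l (Fin.natAdd n j)
  have hl₁ : ∀ i, 0 < l₁ i := fun i => hl _
  have hl₂ : ∀ j, 0 < l₂ j := fun j => hl _
  have hb : 0 < β * √lam := by positivity
  have hinner (k : RobinIndex m l₂ (β * √lam)) :=
    cuboidRobinRiesz_sub_le hγ hβ hn hl₁ hlam (cuboidEigenvalue_nonneg k)
  have hsum := ((summable_rieszWeight_cuboidEigenvalue (γ := γ + n / 2) (lam := lam) hb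
    hl₂).mul_left (Lsc γ n * ∏ i, l₁ i)).mul_left (rq γ n β)
  have hexp : γ + n / 2 + m / 2 = γ + ((n + m : ℕ) : ℝ) / 2 := by push_cast; ring
  calc cuboidRobinRiesz γ (n + m) l (β * √lam) lam
      = ∑' k : RobinIndex m l₂ (β * √lam),
          cuboidRobinRiesz γ n l₁ (β * √lam) (lam - cuboidEigenvalue k) :=
        cuboidRobinRiesz_add hb hl
    _ ≤ ∑' k : RobinIndex m l₂ (β * √lam),
          rq γ n β * (Lsc γ n * (∏ i, l₁ i) * rieszWeight (γ + n / 2) lam (cuboidEigenvalue k)) :=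
        (hsum.of_nonneg_of_le (fun _ => cuboidRobinRiesz_nonneg _ _ _ _ _) hinner).tsum_le_tsum
          hinner hsum
    _ = rq γ n β * (Lsc γ n * ∏ i, l₁ i) * cuboidRobinRiesz (γ + n / 2) m l₂ (β * √lam) lam := by
        rw [cuboidRobinRiesz_eq_tsum, ← tsum_mul_left]
        exact tsum_congr fun k => by ring
    _ ≤ rq γ n β * (Lsc γ n * ∏ i, l₁ i)
          * (rq (γ + n / 2) m β
            * (Lsc (γ + n / 2) m * (∏ j, l₂ j) * lam ^ (γ + n / 2 + m / 2))) := by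
        refine mul_le_mul_of_nonneg_left (cuboidRobinRiesz_le_rq (by positivity) hβ hl₂ hlam) ?_
        exact mul_nonneg (rq_nonneg (by linarith) n β) (mul_nonneg (Lsc_pos (by linarith) n).le
          (Finset.prod_nonneg fun i _ => (hl₁ i).le))
    _ = _ := by rw [hexp, ← Lsc_mul_Lsc (by linarith), Fin.prod_univ_add]; ring

theorem rq_add_le_mul (hγ : 0 ≤ γ) (hβ : 0 < β) (hn : 0 < n) :
    rq γ (n + m) β ≤ rq γ n β * rq (γ + n / 2) m β := by
  have hγn : 0 ≤ γ + n / 2 := by positivity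
  exact rq_le (by linarith) (mul_nonneg (rq_nonneg (by linarith) n β) (rq_nonneg (by linarith) m β))
    fun _ _ hl hlam => cuboidRobinRiesz_le_rq_mul_rq hγ hβ hn hl hlam

end Submultiplicativity

theorem rq_submultiplicative_general
    (γ : ℝ) (hγ : 0 ≤ γ) (d m : ℕ) (hm : 1 ≤ m) (hmd : m ≤ d - 1)
    (β : ℝ) (hβ : 0 < β) :
    rq γ d β ≤ rq γ (d - m) β * rq (γ + ((d : ℝ) - (m : ℝ)) / 2) m β := by
  obtain ⟨n, hn, rfl⟩ : ∃ n, 0 < n ∧ d = n + m := ⟨d - m, by omega, by omega⟩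
  have hcast : ((n + m : ℕ) : ℝ) - m = n := by push_cast; ring
  rw [Nat.add_sub_cancel, hcast]
  exact rq_add_le_mul hγ hβ hn

/-- submultiplicativity
r_{γ,d}(β) ≤ r_{γ,d-m}(β) · r_{γ+(d-m)/2, m}(β) for 1 ≤ m ≤ d-1. -/
theorem rq_submultiplicative
    (γ : ℝ) (hγ : 0 ≤ γ) (d m : ℕ) (hd : 2 ≤ d) (hm : 1 ≤ m) (hmd : m ≤ d - 1)
    (β : ℝ) (hβ : 0 < β) :
    rq γ d β ≤ rq γ (d - m) β * rq (γ + ((d : ℝ) - (m : ℝ)) / 2) m β :=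
  rq_submultiplicative_general γ hγ d m hm hmd β hβ
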